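/- arXiv:1210.0524 — 2 statements merged into one kernel-verified Lean document; each statement's English description precedes it below -/
import Mathlib

section
/- For any finite graph G, the game domination number and Staller-start game domination number differ by at most one: |γ_g(G) − γ_g'(G)| ≤ 1. -/
open Finset

namespace DomGame

variable {V : Type*} [Fintype V] [DecidableEq V]

/-- Closed neighborhood of `v` in `G`, as a `Finset`. -/
noncomputable def cn (G : SimpleGraph V) (v : V) : Finset V :=
  haveI : DecidablePred (fun u : V => u = v ∨ G.Adj v u) := fun _ => Classical.propDecidable _
  Finset.univ.filter (fun u : V => u = v ∨ G.Adj v u)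

/-- Value (number of remaining moves, optimal play) of the domination game on `G`,
with fuel, where `D` is the set of already dominated vertices and `who = true`
means Dominator is to move (minimizing); `who = false` means Staller (maximizing). -/
noncomputable def auxVal (G : SimpleGraph V) : ℕ → Bool → Finset V → ℕ
  | 0, _, _ => 0
  | n + 1, who, D =>
    if D = Finset.univ then 0
    else
      haveI : DecidablePred (fun v : V => ¬ cn G v ⊆ D) := fun _ => Classical.propDecidable _
      let moves : Finset V := Finset.univ.filter (fun v : V => ¬ cn G v ⊆ D)
      if who then
        WithTop.untopD 0 ((moves.image (fun v => 1 + auxVal G n false (D ∪ cn G v))).min)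
      else
        moves.sup (fun v => 1 + auxVal G n true (D ∪ cn G v))

/-- Remaining moves of the domination game on the partially dominated graph `(G, D)`,
Dominator to move, both players optimal. -/
noncomputable def gVal (G : SimpleGraph V) (D : Finset V) : ℕ :=
  auxVal G (Fintype.card V) true D

/-- Remaining moves, Staller to move. -/
noncomputable def gVal' (G : SimpleGraph V) (D : Finset V) : ℕ :=
  auxVal G (Fintype.card V) false D

/-- The game domination number (Dominator starts). -/
noncomputable def gammaG (G : SimpleGraph V) : ℕ := gVal G ∅

/-- The Staller-start game domination number. -/
noncomputable def gammaG' (G : SimpleGraph V) : ℕ := gVal' G ∅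

/-- `S` is a dominating set of `G`. -/
def IsDomSet (G : SimpleGraph V) (S : Finset V) : Prop :=
  ∀ v : V, ∃ u ∈ S, u = v ∨ G.Adj u v

/-- The domination number of `G`. -/
noncomputable def gamma (G : SimpleGraph V) : ℕ :=
  sInf {n | ∃ S : Finset V, IsDomSet G S ∧ S.card = n}

end DomGame

/-!
Dominating more vertices can only shorten the game: if Dominator's optimal move on `D` is still
legal on `D' ⊇ D` it does at least as well there, and otherwise `N[v] ⊆ D'`,
so any legal move on `D'` leads to a position dominating `D ∪ N[v]`. Hence if Dominator starts
with any legal move `v`, the game lasts at most `1 + gVal' G (D ∪ N[v]) ≤ 1 + gVal' G D` moves,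
and dually Staller's optimal first move `v` gives
`gVal' G D = 1 + gVal G (D ∪ N[v]) ≤ 1 + gVal G D`.

The fuel of `auxVal` is harmless: once it bounds the number of undominated vertices, the value no
longer depends on it.
-/

lemma Finset.untopD_min_le {α : Type*} [LinearOrder α] (d : α) {s : Finset α} {a : α}
    (h : a ∈ s) : WithTop.untopD d s.min ≤ a := by
  rw [← coe_min' ⟨a, h⟩, WithTop.untopD_coe]
  exact min'_le s a h

lemma Finset.untopD_min_mem {α : Type*} [LinearOrder α] (d : α) {s : Finset α}
    (hs : s.Nonempty) : WithTop.untopD d s.min ∈ s := by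
  rw [← coe_min' hs, WithTop.untopD_coe]
  exact min'_mem s hs

namespace DomGame

variable {V : Type*} [Fintype V] (G : SimpleGraph V)

lemma mem_cn_self (v : V) : v ∈ cn G v := by
  simp [cn]

noncomputable def legalMoves (D : Finset V) : Finset V :=
  haveI : DecidablePred (fun v : V => ¬ cn G v ⊆ D) := fun _ => Classical.propDecidable _
  univ.filter fun v => ¬ cn G v ⊆ D

variable {G}

lemma mem_legalMoves {D : Finset V} {v : V} : v ∈ legalMoves G D ↔ ¬ cn G v ⊆ D := by
  simp [legalMoves]

lemma legalMoves_nonempty {D : Finset V} (hD : D ≠ univ) : (legalMoves G D).Nonempty := by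
  obtain ⟨v, hv⟩ := not_forall.mp (mt eq_univ_iff_forall.mpr hD)
  exact ⟨v, mem_legalMoves.mpr fun h => hv (h (mem_cn_self G v))⟩

variable [DecidableEq V]

lemma card_compl_pos {D : Finset V} (hD : D ≠ univ) : 0 < #Dᶜ :=
  card_pos.mpr (nonempty_iff_ne_empty.mpr (mt (compl_eq_empty_iff D).mp hD))

lemma card_compl_union_cn_lt {D : Finset V} {v : V} (hv : v ∈ legalMoves G D) :
    #(D ∪ cn G v)ᶜ < #Dᶜ :=
  card_lt_card <| compl_ssubset_compl.mpr <| Finset.ssubset_iff_subset_ne.mpr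
    ⟨subset_union_left, fun h => mem_legalMoves.mp hv (h ▸ subset_union_right)⟩

lemma auxVal_succ (n : ℕ) (who : Bool) (D : Finset V) :
    auxVal G (n + 1) who D =
      if D = univ then 0
      else if who then
        WithTop.untopD 0 (((legalMoves G D).image fun v => 1 + auxVal G n false (D ∪ cn G v)).min)
      else (legalMoves G D).sup fun v => 1 + auxVal G n true (D ∪ cn G v) :=
  rfl

lemma auxVal_univ (n : ℕ) (who : Bool) : auxVal G n who univ = 0 := by
  cases n <;> simp [auxVal]

lemma auxVal_true_succ_le {n : ℕ} {D : Finset V} {v : V} (hv : v ∈ legalMoves G D) :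
    auxVal G (n + 1) true D ≤ 1 + auxVal G n false (D ∪ cn G v) := by
  by_cases hD : D = univ
  · rw [auxVal_succ, if_pos hD]
    omega
  rw [auxVal_succ, if_neg hD, if_pos rfl]
  exact untopD_min_le 0 (mem_image_of_mem _ hv)

lemma le_auxVal_false_succ {n : ℕ} {D : Finset V} {v : V} (hv : v ∈ legalMoves G D) :
    1 + auxVal G n true (D ∪ cn G v) ≤ auxVal G (n + 1) false D := by
  have hD : D ≠ univ := by rintro rfl; exact mem_legalMoves.mp hv (subset_univ _)
  rw [auxVal_succ, if_neg hD, if_neg Bool.false_ne_true]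
  exact le_sup (f := fun v => 1 + auxVal G n true (D ∪ cn G v)) hv

lemma exists_auxVal_true_succ_eq {n : ℕ} {D : Finset V} (hD : D ≠ univ) :
    ∃ v ∈ legalMoves G D, auxVal G (n + 1) true D = 1 + auxVal G n false (D ∪ cn G v) := by
  rw [auxVal_succ, if_neg hD, if_pos rfl]
  obtain ⟨v, hv, hmin⟩ := mem_image.mp <| untopD_min_mem 0 <|
    (legalMoves_nonempty hD).image fun v => 1 + auxVal G n false (D ∪ cn G v)
  exact ⟨v, hv, hmin.symm⟩

lemma exists_auxVal_false_succ_eq {n : ℕ} {D : Finset V} (hD : D ≠ univ) :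
    ∃ v ∈ legalMoves G D, auxVal G (n + 1) false D = 1 + auxVal G n true (D ∪ cn G v) := by
  rw [auxVal_succ, if_neg hD, if_neg Bool.false_ne_true]
  exact exists_mem_eq_sup _ (legalMoves_nonempty hD) _

lemma auxVal_le_of_card_compl_le {n m : ℕ} {who : Bool} {D : Finset V}
    (hn : #Dᶜ ≤ n) (hm : #Dᶜ ≤ m) : auxVal G n who D ≤ auxVal G m who D := by
  induction n generalizing m who D with
  | zero =>
    rw [(compl_eq_empty_iff D).mp (card_eq_zero.mp (Nat.le_zero.mp hn)), auxVal_univ]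
    exact Nat.zero_le _
  | succ n ih =>
    by_cases hD : D = univ
    · simp [hD, auxVal_univ]
    have := card_compl_pos hD
    obtain ⟨m, rfl⟩ : ∃ m', m = m' + 1 := ⟨m - 1, by omega⟩
    have hfuel {v : V} (hv : v ∈ legalMoves G D) (who' : Bool) :
        auxVal G n who' (D ∪ cn G v) ≤ auxVal G m who' (D ∪ cn G v) := by
      have := card_compl_union_cn_lt hv
      exact ih (by omega) (by omega)
    cases who with
    | true =>
      obtain ⟨v, hv, hval⟩ := exists_auxVal_true_succ_eq (n := m) hD
      grw [hval, auxVal_true_succ_le hv, hfuel hv]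
    | false =>
      obtain ⟨v, hv, hval⟩ := exists_auxVal_false_succ_eq (n := n) hD
      grw [hval, hfuel hv, le_auxVal_false_succ hv]

lemma auxVal_eq_of_card_compl_le {n m : ℕ} {who : Bool} {D : Finset V}
    (hn : #Dᶜ ≤ n) (hm : #Dᶜ ≤ m) : auxVal G n who D = auxVal G m who D :=
  (auxVal_le_of_card_compl_le hn hm).antisymm (auxVal_le_of_card_compl_le hm hn)

lemma auxVal_antitone (n : ℕ) (who : Bool) : Antitone (auxVal G n who) := by
  induction n generalizing who with
  | zero => intro D D' _; simp [auxVal]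
  | succ n ih =>
    intro D D' hDD'
    by_cases hD' : D' = univ
    · simp [hD', auxVal_univ]
    have hD : D ≠ univ := fun h => hD' (univ_subset_iff.mp (h ▸ hDD'))
    cases who with
    | true =>
      obtain ⟨v, hv, hval⟩ := exists_auxVal_true_succ_eq (n := n) hD
      rw [hval]
      by_cases hv' : v ∈ legalMoves G D'
      · grw [auxVal_true_succ_le hv', ih false (union_subset_union_left hDD' : D ∪ cn G v ⊆ _)]
      · -- Dominator's optimal reply to `D` is illegal in `D'`; any legal move there does as well.
        obtain ⟨w, hw⟩ := legalMoves_nonempty hD'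
        have hcn : cn G v ⊆ D' := not_not.mp (mt mem_legalMoves.mpr hv')
        grw [auxVal_true_succ_le hw, ih false (subset_union_left : D' ⊆ D' ∪ cn G w),
          ih false (union_subset hDD' hcn)]
    | false =>
      obtain ⟨v, hv, hval⟩ := exists_auxVal_false_succ_eq (n := n) hD'
      have hvD : v ∈ legalMoves G D :=
        mem_legalMoves.mpr fun h => mem_legalMoves.mp hv (h.trans hDD')
      grw [hval, ih true (union_subset_union_left hDD' : D ∪ cn G v ⊆ _),
        le_auxVal_false_succ hvD]

lemma gVal_antitone : Antitone (gVal G) :=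
  auxVal_antitone _ true

lemma gVal'_antitone : Antitone (gVal' G) :=
  auxVal_antitone _ false

lemma gVal_le {D : Finset V} {v : V} (hv : v ∈ legalMoves G D) :
    gVal G D ≤ 1 + gVal' G (D ∪ cn G v) := by
  have := card_compl_union_cn_lt hv
  have := card_le_univ Dᶜ
  obtain ⟨m, hm⟩ : ∃ m, Fintype.card V = m + 1 := ⟨Fintype.card V - 1, by omega⟩
  rw [gVal, gVal', hm,
    ← auxVal_eq_of_card_compl_le (n := m) (D := D ∪ cn G v) (by omega) (by omega)]
  exact auxVal_true_succ_le hv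

lemma exists_gVal'_eq {D : Finset V} (hD : D ≠ univ) :
    ∃ v ∈ legalMoves G D, gVal' G D = 1 + gVal G (D ∪ cn G v) := by
  have := card_compl_pos hD
  have := card_le_univ Dᶜ
  obtain ⟨m, hm⟩ : ∃ m, Fintype.card V = m + 1 := ⟨Fintype.card V - 1, by omega⟩
  obtain ⟨v, hv, hval⟩ := exists_auxVal_false_succ_eq (G := G) (n := m) hD
  have := card_compl_union_cn_lt hv
  refine ⟨v, hv, ?_⟩
  rw [gVal', gVal, hm, hval, auxVal_eq_of_card_compl_le (m := m + 1) (by omega) (by omega)]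

variable (G) in
theorem gVal_le_gVal'_add_one (D : Finset V) : gVal G D ≤ gVal' G D + 1 := by
  by_cases hD : D = univ
  · simp [gVal, hD, auxVal_univ]
  obtain ⟨v, hv⟩ := legalMoves_nonempty hD
  grw [gVal_le hv, gVal'_antitone (subset_union_left : D ⊆ D ∪ cn G v), add_comm]

variable (G) in
theorem gVal'_le_gVal_add_one (D : Finset V) : gVal' G D ≤ gVal G D + 1 := by
  by_cases hD : D = univ
  · simp [gVal', hD, auxVal_univ]
  obtain ⟨v, -, hval⟩ := exists_gVal'_eq (G := G) hD
  grw [hval, gVal_antitone (subset_union_left : D ⊆ D ∪ cn G v), add_comm]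

end DomGame

/-- |γ_g(G) − γ_g'(G)| ≤ 1. -/
theorem stmt1 {V : Type*} [Fintype V] [DecidableEq V] (G : SimpleGraph V) :
    |(DomGame.gammaG G : ℤ) - (DomGame.gammaG' G : ℤ)| ≤ 1 := by
  have h₁ : DomGame.gammaG G ≤ DomGame.gammaG' G + 1 := DomGame.gVal_le_gVal'_add_one G ∅
  have h₂ : DomGame.gammaG' G ≤ DomGame.gammaG G + 1 := DomGame.gVal'_le_gVal_add_one G ∅
  rw [abs_sub_le_iff]
  omega
end

section
/- In any partially dominated forest F that is not yet completely dominated, there exists a legal move for Staller which newly dominates at most two vertices. -/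
/-!
The undominated vertices induce a forest, and every nonempty finite forest has a vertex with at
most one neighbour: an end of a longest path, whose neighbours must all lie on that path and hence
equal its second vertex. Playing such a vertex `x` newly dominates only `x` and possibly that one
undominated neighbour.
-/

open Finset

namespace SimpleGraph

variable {V : Type*} {G : SimpleGraph V}

theorem IsAcyclic.exists_neighborSet_subsingleton [Finite V] [Nonempty V] (hG : G.IsAcyclic) :
    ∃ v, (G.neighborSet v).Subsingleton := by
  obtain ⟨u, v, p, hp, hlongest⟩ := Walk.exists_isPath_forall_isPath_length_le_length G
  have hsnd : ∀ w ∈ G.neighborSet u, w = p.snd := fun w hw =>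
    hG.eq_snd_of_adj_start hp hw <| by
      by_contra hwp
      have := hlongest w v (.cons hw.symm p) (hp.cons hwp)
      simp only [Walk.length_cons] at this
      omega
  exact ⟨u, fun w hw w' hw' => (hsnd w hw).trans (hsnd w' hw').symm⟩

end SimpleGraph

namespace DomGame

theorem mem_cn {V : Type*} [Fintype V] {G : SimpleGraph V} {u v : V} :
    u ∈ cn G v ↔ u = v ∨ G.Adj v u := by
  simp [cn]

end DomGame

open DomGame in
/-- in a partially dominated forest which is not completely dominated,
Staller has a legal move newly dominating at most two vertices. -/
theorem stmt3 {V : Type*} [Fintype V] [DecidableEq V] (F : SimpleGraph V)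
    (hF : F.IsAcyclic) (D : Finset V) (hD : D ≠ Finset.univ) :
    ∃ v : V, 1 ≤ ((DomGame.cn F v) \ D).card ∧ ((DomGame.cn F v) \ D).card ≤ 2 := by
  let U : Set V := {v | v ∉ D}
  have : Nonempty U := by
    simpa [U, eq_univ_iff_forall] using hD
  obtain ⟨⟨x, hxD⟩, hx⟩ := (hF.induce U).exists_neighborSet_subsingleton
  have hx_mem : x ∈ cn F x \ D := mem_sdiff.mpr ⟨mem_cn.mpr (.inl rfl), hxD⟩
  have hothers : ((cn F x \ D).erase x).card ≤ 1 := by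
    refine card_le_one.mpr fun y hy y' hy' => ?_
    simp only [mem_erase, mem_sdiff, mem_cn] at hy hy'
    have hxy : (F.induce U).Adj ⟨x, hxD⟩ ⟨y, hy.2.2⟩ := by
      simpa using hy.2.1.resolve_left hy.1
    have hxy' : (F.induce U).Adj ⟨x, hxD⟩ ⟨y', hy'.2.2⟩ := by
      simpa using hy'.2.1.resolve_left hy'.1
    exact congrArg Subtype.val (hx hxy hxy')
  have hcard := card_erase_add_one hx_mem
  exact ⟨x, by omega, by omega⟩
end
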